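/- Let B = colim_i B_i be a filtered colimit of commutative rings along flat transition maps, and let φ : B → C be a ring homomorphism such that each composite B_i → B → C is flat. Then each structural map B_i → B is flat, and φ is flat. -/

import Mathlib

/-!
Both claims follow from the equational criterion for flatness. A relation
`∑ φ (r k) * x k = 0` in `C` has finitely many coefficients in `B`, so they all come from one
`B i`, where flatness of `B i → C` trivializes it; the trivialization maps back along `B i → B`.
For `B i → B`, lift the `x k` to some `B j`: the lifted relation holds in a later `B j'`, where
flatness of `B i → B j'` trivializes it, and this trivialization maps forward to `B`.
-/

namespace RingHom

variable {R S T : Type*} [CommRing R] [CommRing S] [CommRing T]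

def IsTrivialRelation (φ : R →+* S) {l : ℕ} (r : Fin l → R) (x : Fin l → S) : Prop :=
  ∃ (k : ℕ) (a : Fin l → Fin k → R) (y : Fin k → S),
    (∀ i, x i = ∑ j, φ (a i j) * y j) ∧ ∀ j, ∑ i, r i * a i j = 0

theorem flat_iff_forall_isTrivialRelation (φ : R →+* S) :
    φ.Flat ↔ ∀ {l : ℕ} {r : Fin l → R} {x : Fin l → S},
      ∑ i, φ (r i) * x i = 0 → φ.IsTrivialRelation r x :=
  letI := φ.toAlgebra
  Module.Flat.iff_forall_isTrivialRelation

theorem IsTrivialRelation.of_comp {φ : S →+* T} {ψ : R →+* S} {l : ℕ} {r : Fin l → R}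
    {x : Fin l → T} (h : (φ.comp ψ).IsTrivialRelation r x) :
    φ.IsTrivialRelation (ψ ∘ r) x := by
  obtain ⟨k, a, y, hx, ha⟩ := h
  refine ⟨k, fun i j => ψ (a i j), y, hx, fun j => ?_⟩
  simp only [Function.comp_apply, ← map_mul, ← map_sum, ha, map_zero]

theorem IsTrivialRelation.comp {φ : R →+* S} {l : ℕ} {r : Fin l → R} {x : Fin l → S}
    (h : φ.IsTrivialRelation r x) (ψ : S →+* T) :
    (ψ.comp φ).IsTrivialRelation r (ψ ∘ x) := by
  obtain ⟨k, a, y, hx, ha⟩ := h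
  exact ⟨k, a, ψ ∘ y, fun i => by simp [hx], ha⟩


theorem Flat.of_forall_flat_comp {ι : Type*} {A : ι → Type*} [∀ i, CommRing (A i)]
    {g : ∀ i, A i →+* S} (hlift : ∀ {l : ℕ} (b : Fin l → S), ∃ i, ∃ z : Fin l → A i, g i ∘ z = b)
    {φ : S →+* T} (hφ : ∀ i, (φ.comp (g i)).Flat) : φ.Flat := by
  rw [flat_iff_forall_isTrivialRelation]
  intro l r x h
  obtain ⟨i, z, rfl⟩ := hlift r
  exact ((flat_iff_forall_isTrivialRelation _).mp (hφ i) (by simpa using h)).of_comp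

end RingHom

section DirectedSystem

variable {ι : Type*} [Preorder ι] [IsDirected ι (· ≤ ·)] {B : ι → Type*} [∀ i, CommRing (B i)]
  {f : ∀ i j, i ≤ j → B i →+* B j} {Bc : Type*} [CommRing Bc] {g : ∀ i, B i →+* Bc}

theorem exists_ge_lift (hg_comp : ∀ i j (hij : i ≤ j) (x : B i), g j (f i j hij x) = g i x)
    (hg_surj : ∀ b : Bc, ∃ i, ∃ x : B i, g i x = b) (i₀ : ι) {l : ℕ} (b : Fin l → Bc) :
    ∃ j, ∃ _ : i₀ ≤ j, ∃ z : Fin l → B j, g j ∘ z = b := by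
  classical
  choose idx z hz using fun k => hg_surj (b k)
  have : Nonempty ι := ⟨i₀⟩
  obtain ⟨j, hj⟩ := (insert i₀ (Finset.univ.image idx)).exists_le
  refine ⟨j, hj _ (Finset.mem_insert_self _ _), fun k => f (idx k) j ?_ (z k), ?_⟩
  · exact hj _ (Finset.mem_insert_of_mem (Finset.mem_image_of_mem _ (Finset.mem_univ k)))
  · ext k
    simp [hg_comp, hz]

theorem exists_ge_lift_of_sum_mul_eq_zero
    (hf_comp : ∀ i j k (hij : i ≤ j) (hjk : j ≤ k) (x : B i),
      f j k hjk (f i j hij x) = f i k (hij.trans hjk) x)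
    (hg_comp : ∀ i j (hij : i ≤ j) (x : B i), g j (f i j hij x) = g i x)
    (hg_surj : ∀ b : Bc, ∃ i, ∃ x : B i, g i x = b)
    (hg_inj : ∀ i (x : B i), g i x = 0 → ∃ j, ∃ hij : i ≤ j, f i j hij x = 0)
    {i : ι} {l : ℕ} {r : Fin l → B i} {x : Fin l → Bc} (h : ∑ k, g i (r k) * x k = 0) :
    ∃ j, ∃ hij : i ≤ j, ∃ z : Fin l → B j, g j ∘ z = x ∧ ∑ k, f i j hij (r k) * z k = 0 := by
  obtain ⟨j, hij, z, rfl⟩ := exists_ge_lift hg_comp hg_surj i x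
  have hs : g j (∑ k, f i j hij (r k) * z k) = 0 := by simpa [hg_comp] using h
  obtain ⟨j', hjj', hs'⟩ := hg_inj j _ hs
  refine ⟨j', hij.trans hjj', f j j' hjj' ∘ z, ?_, ?_⟩
  · ext k
    simp [hg_comp]
  · simpa [hf_comp] using hs'

theorem flat_colimitMap_of_flat_transition
    (hf_comp : ∀ i j k (hij : i ≤ j) (hjk : j ≤ k) (x : B i),
      f j k hjk (f i j hij x) = f i k (hij.trans hjk) x)
    (hf_flat : ∀ i j (hij : i ≤ j), (f i j hij).Flat)
    (hg_comp : ∀ i j (hij : i ≤ j) (x : B i), g j (f i j hij x) = g i x)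
    (hg_surj : ∀ b : Bc, ∃ i, ∃ x : B i, g i x = b)
    (hg_inj : ∀ i (x : B i), g i x = 0 → ∃ j, ∃ hij : i ≤ j, f i j hij x = 0)
    (i : ι) : (g i).Flat := by
  rw [RingHom.flat_iff_forall_isTrivialRelation]
  intro l r x h
  obtain ⟨j, hij, z, rfl, hz⟩ := exists_ge_lift_of_sum_mul_eq_zero hf_comp hg_comp hg_surj hg_inj h
  have hgf : (g j).comp (f i j hij) = g i := RingHom.ext (hg_comp i j hij)
  simpa [hgf] using
    (((f i j hij).flat_iff_forall_isTrivialRelation).mp (hf_flat i j hij) hz).comp (g j)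

end DirectedSystem

theorem flatness_of_filtered_colimit
    {ι : Type*} [Preorder ι] [IsDirected ι (· ≤ ·)] [Nonempty ι]
    (B : ι → Type*) [∀ i, CommRing (B i)]
    (f : ∀ i j, i ≤ j → (B i →+* B j))
    (hf_comp : ∀ i j k (hij : i ≤ j) (hjk : j ≤ k) (x : B i),
      f j k hjk (f i j hij x) = f i k (hij.trans hjk) x)
    (hf_flat : ∀ i j (hij : i ≤ j), (f i j hij).Flat)
    (Bc : Type*) [CommRing Bc] (g : ∀ i, B i →+* Bc)
    (hg_comp : ∀ i j (hij : i ≤ j) (x : B i), g j (f i j hij x) = g i x)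
    (hg_jointly_surj : ∀ b : Bc, ∃ i, ∃ x : B i, g i x = b)
    (hg_eventually_inj : ∀ i (x : B i), g i x = 0 → ∃ j, ∃ hij : i ≤ j, f i j hij x = 0)
    (C : Type*) [CommRing C] (φ : Bc →+* C)
    (hφ : ∀ i, ((φ.comp (g i)).Flat)) :
    (∀ i, (g i).Flat) ∧ φ.Flat := by
  refine ⟨flat_colimitMap_of_flat_transition hf_comp hf_flat hg_comp hg_jointly_surj hg_eventually_inj,
    RingHom.Flat.of_forall_flat_comp (fun b => ?_) hφ⟩
  obtain ⟨j, -, z, hz⟩ := exists_ge_lift hg_comp hg_jointly_surj (Classical.arbitrary ι) b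
  exact ⟨j, z, hz⟩
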